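/- arXiv:2307.13759 — 3 statements merged into one kernel-verified Lean document; each statement's English description precedes it below -/
import Mathlib

section
/- Let G₁, G₂, G_T be commutative groups of exponent p (prime) and e : G₁ → G₂ → G_T a bilinear map (e(g^a, h^b) = e(g,h)^{a·b} with ZMod p exponents, multiplicative in each argument). Let g₁ ∈ G₁, g₂, w ∈ G₂, h ∈ G₁, and γ, x, y, α ∈ ZMod p with w = g₂^γ. Suppose A ∈ G₁ satisfies e(A, w * g₂^x) = e(g₁ * h^{-y}, g₂), and set B = A * h^α. Then e(g₁, g₂) = e(B, w) * e(B, g₂)^x * e(h, w)^{-α} * e(h, g₂)^{y - α·x}. -/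
def gpow {p : ℕ} {G : Type*} [CommGroup G] (g : G) (a : ZMod p) : G := g ^ a.val

/-!
Pairing `B = A·h^α` against `w·g₂^x` and expanding bilinearly gives
`e(B, w)·e(B, g₂)^x = e(A, w·g₂^x)·e(h, w)^α·e(h, g₂)^{αx} = e(g₁, g₂)·e(h, g₂)^{-y}·e(h, w)^α·e(h, g₂)^{αx}`,
and the last two factors of the claimed relation cancel exactly the `h`-terms.
-/

section Gpow

variable {p : ℕ} {G H : Type*} [CommGroup G] [CommGroup H]

theorem mul_gpow (g g' : G) (a : ZMod p) : gpow (g * g') a = gpow g a * gpow g' a :=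
  mul_pow g g' a.val

theorem map_gpow (f : G →* H) (g : G) (a : ZMod p) : f (gpow g a) = gpow (f g) a :=
  map_pow f g a.val

theorem gpow_gpow (hexp : ∀ g : G, g ^ p = 1) (g : G) (a b : ZMod p) :
    gpow (gpow g a) b = gpow g (a * b) := by
  rw [gpow, gpow, gpow, ZMod.val_mul, ← pow_eq_pow_mod _ (hexp g), pow_mul]

variable [NeZero p]

theorem gpow_add (hexp : ∀ g : G, g ^ p = 1) (g : G) (a b : ZMod p) :
    gpow g (a + b) = gpow g a * gpow g b := by
  rw [gpow, ZMod.val_add, ← pow_eq_pow_mod _ (hexp g), pow_add, gpow, gpow]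

theorem gpow_neg (hexp : ∀ g : G, g ^ p = 1) (g : G) (a : ZMod p) :
    gpow g (-a) = (gpow g a)⁻¹ := by
  rw [eq_inv_iff_mul_eq_one, ← gpow_add hexp, neg_add_cancel, gpow, ZMod.val_zero, pow_zero]

theorem gpow_sub (hexp : ∀ g : G, g ^ p = 1) (g : G) (a b : ZMod p) :
    gpow g (a - b) = gpow g a * (gpow g b)⁻¹ := by
  rw [sub_eq_add_neg, gpow_add hexp, gpow_neg hexp]

end Gpow

theorem pairing_gpow_left {p : ℕ} {G₁ G₂ GT : Type*} [CommGroup G₁] [CommGroup GT]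
    (e : G₁ → G₂ → GT) (hmul₁ : ∀ (g g' : G₁) (h : G₂), e (g * g') h = e g h * e g' h)
    (g : G₁) (k : G₂) (a : ZMod p) : e (gpow g a) k = gpow (e g k) a :=
  map_gpow (MonoidHom.mk' (e · k) fun g g' => hmul₁ g g' k) g a

theorem pairing_gpow_right {p : ℕ} {G₁ G₂ GT : Type*} [CommGroup G₂] [CommGroup GT]
    (e : G₁ → G₂ → GT) (hmul₂ : ∀ (g : G₁) (h h' : G₂), e g (h * h') = e g h * e g h')
    (g : G₁) (k : G₂) (a : ZMod p) : e g (gpow k a) = gpow (e g k) a :=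
  map_gpow (MonoidHom.mk' (e g) (hmul₂ g)) k a

theorem stmt3_general {p : ℕ} [Fact p.Prime]
    {G₁ G₂ GT : Type*} [CommGroup G₁] [CommGroup G₂] [CommGroup GT]
    (hexpT : ∀ g : GT, g ^ p = 1)
    (e : G₁ → G₂ → GT)
    (hmul₁ : ∀ (g g' : G₁) (h : G₂), e (g * g') h = e g h * e g' h)
    (hmul₂ : ∀ (g : G₁) (h h' : G₂), e g (h * h') = e g h * e g h')
    (g₁ h A B : G₁) (g₂ w : G₂) (x y α : ZMod p)
    (hA : e A (w * gpow g₂ x) = e (g₁ * gpow h (-y)) g₂)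
    (hB : B = A * gpow h α) :
    e g₁ g₂ =
      e B w * gpow (e B g₂) x * gpow (e h w) (-α) * gpow (e h g₂) (y - α * x) := by
  have hB_paired : e B w * gpow (e B g₂) x = e B (w * gpow g₂ x) := by
    rw [hmul₂, pairing_gpow_right e hmul₂]
  have hB_expanded : e B (w * gpow g₂ x) =
      e g₁ g₂ * (gpow (e h g₂) y)⁻¹ * (gpow (e h w) α * gpow (e h g₂) (α * x)) := by
    rw [hB, hmul₁, hA, hmul₁, pairing_gpow_left e hmul₁, pairing_gpow_left e hmul₁,
      gpow_neg hexpT, hmul₂, mul_gpow, pairing_gpow_right e hmul₂, gpow_gpow hexpT, mul_comm x α]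
  rw [hB_paired, hB_expanded, gpow_neg hexpT, gpow_sub hexpT]
  apply Additive.ofMul.injective
  simp only [ofMul_mul, ofMul_inv]
  abel

/-- The key pairing identity of AEE group-signature verification:
a credential `A` with `e(A, w·g₂^x) = e(g₁·h^{-y}, g₂)` blinded to `B = A·h^α`
satisfies the R₄ relation. -/
theorem stmt3 {p : ℕ} [Fact p.Prime]
    {G₁ G₂ GT : Type*} [CommGroup G₁] [CommGroup G₂] [CommGroup GT]
    (hexp₁ : ∀ g : G₁, g ^ p = 1) (hexp₂ : ∀ g : G₂, g ^ p = 1)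
    (hexpT : ∀ g : GT, g ^ p = 1)
    (e : G₁ → G₂ → GT)
    (hbil : ∀ (g : G₁) (h : G₂) (a b : ZMod p),
      e (gpow g a) (gpow h b) = gpow (e g h) (a * b))
    (hmul₁ : ∀ (g g' : G₁) (h : G₂), e (g * g') h = e g h * e g' h)
    (hmul₂ : ∀ (g : G₁) (h h' : G₂), e g (h * h') = e g h * e g h')
    (g₁ h A B : G₁) (g₂ w : G₂) (γ x y α : ZMod p)
    (hw : w = gpow g₂ γ)
    (hA : e A (w * gpow g₂ x) = e (g₁ * gpow h (-y)) g₂)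
    (hB : B = A * gpow h α) :
    e g₁ g₂ =
      e B w * gpow (e B g₂) x * gpow (e h w) (-α) * gpow (e h g₂) (y - α * x) :=
  stmt3_general hexpT e hmul₁ hmul₂ g₁ h A B g₂ w x y α hA hB
end

section
/- Let G be a commutative group of exponent p (prime) with g ∈ G of order p, and let a, ξ, z ∈ ZMod p with a ≠ 0, ξ ≠ 0. Set g₁ = g^z, h = g^{a·ξ}. Suppose γ, x, Δx, y, Δy ∈ ZMod p satisfy γ + x ≠ 0, γ + Δx ≠ 0, and g^{(z - Δy·a·ξ)·(γ+Δx)⁻¹} = g^{(z - y·a·ξ)·(γ+x)⁻¹} (i.e., (g₁ h^{-Δy})^{1/(γ+Δx)} = (g₁ h^{-y})^{1/(γ+x)}). Then y = (z·(Δx - x) + Δy·a·ξ·(γ + x)) · ((γ + Δx)·a·ξ)⁻¹. -/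
lemma gpow_injective {n : ℕ} [NeZero n] {G : Type*} [CommGroup G] {g : G}
    (hg : orderOf g = n) : Function.Injective (gpow (p := n) g) := fun u v h =>
  ZMod.val_injective n <|
    pow_injOn_Iio_orderOf (hg ▸ ZMod.val_lt u) (hg ▸ ZMod.val_lt v) h

theorem stmt18_general {p : ℕ} [Fact p.Prime] {G : Type*} [CommGroup G]
    (g : G) (hg : orderOf g = p)
    (a ξ z γ x Δx y Δy : ZMod p)
    (ha : a ≠ 0) (hξ : ξ ≠ 0) (hγx : γ + x ≠ 0) (hγΔx : γ + Δx ≠ 0)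
    (heq : gpow g ((z - Δy * a * ξ) * (γ + Δx)⁻¹) =
      gpow g ((z - y * a * ξ) * (γ + x)⁻¹)) :
    y = (z * (Δx - x) + Δy * a * ξ * (γ + x)) * ((γ + Δx) * a * ξ)⁻¹ := by
  have hexponents := gpow_injective hg heq
  field_simp at hexponents ⊢
  linear_combination hexponents

/-- Discrete-log extraction in the non-frameability proof of the AEE
protocol. -/
theorem stmt18 {p : ℕ} [Fact p.Prime] {G : Type*} [CommGroup G]
    (hexp : ∀ g : G, g ^ p = 1)
    (g : G) (hg : orderOf g = p)
    (a ξ z γ x Δx y Δy : ZMod p)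
    (ha : a ≠ 0) (hξ : ξ ≠ 0) (hγx : γ + x ≠ 0) (hγΔx : γ + Δx ≠ 0)
    (heq : gpow g ((z - Δy * a * ξ) * (γ + Δx)⁻¹) =
      gpow g ((z - y * a * ξ) * (γ + x)⁻¹)) :
    y = (z * (Δx - x) + Δy * a * ξ * (γ + x)) * ((γ + Δx) * a * ξ)⁻¹ :=
  stmt18_general g hg a ξ z γ x Δx y Δy ha hξ hγx hγΔx heq
end

section
/- Let p be prime and x_1, …, x_q ∈ ZMod p be pairwise distinct, y_1, …, y_q ∈ ZMod p, and Δx ∈ ZMod p with Δx ∉ {x_1, …, x_q}. Suppose η, θ_1, …, θ_q are chosen independently and uniformly from ZMod p \ {0}. Define Q(-Δx) = η·∏_{i=1}^q (x_i - Δx) + ∑_{k=1}^q θ_k·(y_k - Δy)·∏_{j ≠ k} (x_j - Δx) for a fixed Δy ∈ ZMod p. Then the probability (over η, θ_1, …, θ_q) that Q(-Δx) = 0 is at most 1/(p-1). -/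
open Finset

theorem card_filter_div_card_prod_le {K α β : Type*} [Field K] [LinearOrder K]
    [IsStrictOrderedRing K] [Fintype α] [Fintype β] (P : α × β → Prop) [DecidablePred P]
    (hP : ∀ b, {a | P (a, b)}.Subsingleton) :
    ((univ.filter P).card : K) / (univ : Finset (α × β)).card ≤ 1 / Fintype.card α := by
  have hle : (univ.filter P).card ≤ Fintype.card β :=
    calc (univ.filter P).card ≤ (univ : Finset β).card :=
          card_le_card_of_injOn Prod.snd (fun _ _ => mem_univ _)
            fun u hu v hv huv => Prod.ext (hP u.2 (by simpa using hu) (by simpa [huv] using hv)) huv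
      _ = Fintype.card β := card_univ
  rw [card_univ, Fintype.card_prod, Nat.cast_mul]
  calc ((univ.filter P).card : K) / (Fintype.card α * Fintype.card β)
      ≤ Fintype.card β / (Fintype.card α * Fintype.card β) := by gcongr
    _ ≤ 1 / Fintype.card α := by
      rcases (Fintype.card β).eq_zero_or_pos with h | h
      · simp [h]
      · rw [div_mul_cancel_right₀ (by positivity), one_div]

theorem ZMod.card_subtype_ne_zero (p : ℕ) [NeZero p] : Fintype.card {z : ZMod p // z ≠ 0} = p - 1 := by
  rw [Fintype.card_subtype_compl, Fintype.card_subtype_eq, ZMod.card]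

theorem stmt19_general {p : ℕ} [Fact p.Prime] (q : ℕ)
    (x : Fin q → ZMod p)
    (y : Fin q → ZMod p) (Δx Δy : ZMod p)
    (hΔx : ∀ i, Δx ≠ x i) :
    ((Finset.univ.filter
        (fun ηθ : {z : ZMod p // z ≠ 0} × (Fin q → {z : ZMod p // z ≠ 0}) =>
          (ηθ.1 : ZMod p) * ∏ i, (x i - Δx) +
            ∑ k, (ηθ.2 k : ZMod p) * (y k - Δy) *
              ∏ j ∈ Finset.univ.erase k, (x j - Δx) = 0)).card : ℚ) /
      ((Finset.univ :
        Finset ({z : ZMod p // z ≠ 0} × (Fin q → {z : ZMod p // z ≠ 0}))).card : ℚ) ≤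
    1 / (p - 1 : ℚ) := by
  have hprod : ∏ i, (x i - Δx) ≠ 0 :=
    prod_ne_zero_iff.mpr fun i _ => sub_ne_zero.mpr (hΔx i).symm
  -- for fixed `θ`, the value of `Q(-Δx)` is affine in `η` with nonzero slope `∏ (xᵢ - Δx)`
  refine (card_filter_div_card_prod_le _ fun θ η hη η' hη' => ?_).trans_eq ?_
  · simp only [Set.mem_ofPred_eq] at hη hη'
    exact Subtype.ext (mul_right_cancel₀ hprod (by linear_combination hη - hη'))
  · have : NeZero p := ⟨(Fact.out : p.Prime).ne_zero⟩
    rw [ZMod.card_subtype_ne_zero, Nat.cast_pred (NeZero.pos p)]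

/-- Case 1 of the traceability reduction: the extracted value
`Q(-Δx) = η·∏(xᵢ-Δx) + ∑ θₖ(yₖ-Δy)∏_{j≠k}(xⱼ-Δx)` vanishes with probability
at most `1/(p-1)` over uniform nonzero `η, θ₁, …, θ_q`. -/
theorem stmt19 {p : ℕ} [Fact p.Prime] (q : ℕ)
    (x : Fin q → ZMod p) (hx : Function.Injective x)
    (y : Fin q → ZMod p) (Δx Δy : ZMod p)
    (hΔx : ∀ i, Δx ≠ x i) :
    ((Finset.univ.filter
        (fun ηθ : {z : ZMod p // z ≠ 0} × (Fin q → {z : ZMod p // z ≠ 0}) =>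
          (ηθ.1 : ZMod p) * ∏ i, (x i - Δx) +
            ∑ k, (ηθ.2 k : ZMod p) * (y k - Δy) *
              ∏ j ∈ Finset.univ.erase k, (x j - Δx) = 0)).card : ℚ) /
      ((Finset.univ :
        Finset ({z : ZMod p // z ≠ 0} × (Fin q → {z : ZMod p // z ≠ 0}))).card : ℚ) ≤
    1 / (p - 1 : ℚ) :=
  stmt19_general q x y Δx Δy hΔx
end
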